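/- Fix μ₁ ∈ (−1/2,1/2) and K > 0, and let μ̃₂ : (0,ε₀) → ℝ be any function with |μ̃₂(ε)| ≤ K. For ε ∈ (0,ε₀) set μ̃(ε) = 1/2 + (1/2+μ₁)ε + μ̃₂(ε) ε² log²(ε) and ν̃(ε) = √( μ̃(ε)² − ε/(1−ε) ) (which satisfies ν̃ < 1/2 < μ̃ for ε small). Then, as ε → 0⁺, [ (1/(2μ̃)) log( (μ̃ − 1/2)/(1/2 − ν̃) ) − log( (1/2+μ₁)/(1/2−μ₁) ) − ( μ̃₂(ε)/(1/4 − μ₁²) ) ε log²(ε) ] / ( ε log²(ε) ) → 0. -/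

import Mathlib

/-!
Put `a = 1/2 + μ₁`, `b = 1/2 - μ₁` (so `a + b = 1`, `ab = 1/4 - μ₁²`), `t = ε log² ε` and
`c = a + μ̃₂ t`, so that `μ̃ = 1/2 + εc`. Then `ν̃² = 1/4 - εQ` with `Q = 1/(1-ε) - c - εc²`, hence
`1/2 - ν̃ = εQ / (1/2 + ν̃)` and `(μ̃ - 1/2)/(1/2 - ν̃) = c (1/2 + ν̃) / Q`. Since `c = a + μ̃₂ t`,
`Q = b - μ̃₂ t + O(ε)`, `1/2 + ν̃ = 1 + O(ε)` and `ε = o(t)`, expanding each logarithm to first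
order gives `log(a/b) + μ̃₂ t (1/a + 1/b) + o(t)`, and `1/a + 1/b = 1/(ab)`. The prefactor
`1/(2μ̃) = 1 + O(ε)` only adds `O(ε) = o(t)`.
-/

noncomputable section

/-- The rescaled root `μ̃(ε) = 1/2 + (1/2+μ₁)ε + μ̃₂(ε) ε² log²(ε)`. -/
def muTilde (μ₁ : ℝ) (μ₂ : ℝ → ℝ) (ε : ℝ) : ℝ :=
  1 / 2 + (1 / 2 + μ₁) * ε + μ₂ ε * ε ^ 2 * (Real.log ε) ^ 2

/-- The rescaled root `ν̃(ε) = √(μ̃(ε)² − ε/(1−ε))`. -/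
def nuTilde (μ₁ : ℝ) (μ₂ : ℝ → ℝ) (ε : ℝ) : ℝ :=
  Real.sqrt (muTilde μ₁ μ₂ ε ^ 2 - ε / (1 - ε))

open Real Filter Topology Asymptotics

theorem abs_log_one_add_sub_self_le {y : ℝ} (hy : |y| ≤ 1 / 2) :
    |log (1 + y) - y| ≤ 2 * y ^ 2 := by
  have h := abs_log_sub_add_sum_range_le (x := -y) (by rw [abs_neg]; linarith) 1
  rw [Finset.sum_range_one, abs_neg, sub_neg_eq_add] at h
  norm_num at h
  calc |log (1 + y) - y| = |-y + log (1 + y)| := by congr 1; ring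
    _ ≤ y ^ 2 / (1 - |y|) := h
    _ ≤ y ^ 2 / (1 / 2) := by gcongr; linarith
    _ = 2 * y ^ 2 := by ring

theorem isLittleO_log_add_sub_log_sub_div {α : Type*} {l : Filter α} {t u : α → ℝ} {a : ℝ}
    (ha : 0 < a) (hu : u =O[l] t) (ht : Tendsto t l (𝓝 0)) :
    (fun x => log (a + u x) - log a - u x / a) =o[l] t := by
  have hu0 : Tendsto u l (𝓝 0) := hu.trans_tendsto ht
  have hsmall : ∀ᶠ x in l, |u x / a| ≤ 1 / 2 := by
    have : Tendsto (fun x => |u x / a|) l (𝓝 0) := by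
      simpa using (hu0.div_const a).abs
    exact (this.eventually_lt_const (by norm_num)).mono fun _ h => h.le
  have hquad : (fun x => log (a + u x) - log a - u x / a) =O[l] (fun x => u x * u x) := by
    refine IsBigO.of_bound (2 / a ^ 2) ?_
    filter_upwards [hsmall] with x hx
    have hpos : 0 < 1 + u x / a := by linarith [(abs_le.mp hx).1]
    have hsplit : a + u x = a * (1 + u x / a) := by field_simp
    rw [hsplit, log_mul ha.ne' hpos.ne', add_sub_cancel_left, Real.norm_eq_abs,
      Real.norm_eq_abs, abs_mul_self]
    calc |log (1 + u x / a) - u x / a| ≤ 2 * (u x / a) ^ 2 := abs_log_one_add_sub_self_le hx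
      _ = 2 / a ^ 2 * (u x * u x) := by ring
  simpa using hquad.trans_isLittleO (hu.mul_isLittleO ((isLittleO_one_iff ℝ).mpr hu0))

theorem abs_sqrt_quarter_sub_sub_half_le {s : ℝ} (hs : s ≤ 1 / 4) :
    |√(1 / 4 - s) - 1 / 2| ≤ 2 * |s| := by
  set ν := √(1 / 4 - s)
  have hν : 0 ≤ ν := sqrt_nonneg _
  have hνsq : ν ^ 2 = 1 / 4 - s := sq_sqrt (by linarith)
  have hprod : |ν - 1 / 2| * (ν + 1 / 2) = |s| := by
    rw [← abs_of_pos (by linarith : 0 < ν + 1 / 2), ← abs_mul, ← abs_neg s]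
    congr 1
    linear_combination hνsq
  nlinarith [abs_nonneg (ν - 1 / 2)]

def quarterDefect (ε x : ℝ) : ℝ := 1 / (1 - ε) - x - ε * x ^ 2

theorem half_add_mul_sq_sub (ε x : ℝ) :
    (1 / 2 + ε * x) ^ 2 - ε / (1 - ε) = 1 / 4 - ε * quarterDefect ε x := by
  unfold quarterDefect; ring

theorem quarterDefect_sub_one_sub {ε : ℝ} (x : ℝ) (hε : ε ≠ 1) :
    quarterDefect ε x - (1 - x) = ε * (1 / (1 - ε) - x ^ 2) := by
  unfold quarterDefect
  field_simp [sub_ne_zero.mpr hε.symm]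
  ring

theorem log_ratio_eq_log_add_log_sub_log {ε x : ℝ} (hε : 0 < ε) (hx : 0 < x)
    (hQ : 0 < quarterDefect ε x) (hQ4 : ε * quarterDefect ε x ≤ 1 / 4) :
    log ((1 / 2 + ε * x - 1 / 2) / (1 / 2 - √((1 / 2 + ε * x) ^ 2 - ε / (1 - ε))))
      = log x + log (1 + (√(1 / 4 - ε * quarterDefect ε x) - 1 / 2))
        - log (quarterDefect ε x) := by
  rw [half_add_mul_sq_sub]
  set Q := quarterDefect ε x
  set ν := √(1 / 4 - ε * Q)
  have hν : 0 ≤ ν := sqrt_nonneg _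
  have hνsq : ν ^ 2 = 1 / 4 - ε * Q := sq_sqrt (by linarith)
  have hεQ : 0 < ε * Q := mul_pos hε hQ
  have hνlt : ν < 1 / 2 := by nlinarith
  have hratio : (1 / 2 + ε * x - 1 / 2) / (1 / 2 - ν) = x * (1 + (ν - 1 / 2)) / Q := by
    rw [div_eq_div_iff (by linarith) hQ.ne']
    linear_combination x * hνsq
  rw [hratio, log_div (mul_pos hx (by linarith)).ne' hQ.ne', log_mul hx.ne' (by linarith)]

section
variable {a b : ℝ} {c Q m t μ : ℝ → ℝ}

theorem isBigO_quarterDefect_sub_one_sub (hc : Tendsto c (𝓝[>] 0) (𝓝 a)) :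
    (fun ε => quarterDefect ε (c ε) - (1 - c ε)) =O[𝓝[>] 0] (fun ε => ε) := by
  have hε : Tendsto (fun ε : ℝ => ε) (𝓝[>] 0) (𝓝 0) := nhdsWithin_le_nhds
  have hfac : Tendsto (fun ε => 1 / (1 - ε) - c ε ^ 2) (𝓝[>] 0) (𝓝 (1 / (1 - 0) - a ^ 2)) :=
    (tendsto_const_nhds.div (tendsto_const_nhds.sub hε) (by norm_num)).sub (hc.pow 2)
  refine ((isBigO_refl (fun ε : ℝ => ε) _).mul (hfac.isBigO_one ℝ)).congr' ?_
    (Eventually.of_forall fun _ => mul_one _)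
  filter_upwards [hε.eventually_ne (by norm_num : (0 : ℝ) ≠ 1)] with ε hε1
  rw [quarterDefect_sub_one_sub _ hε1]

theorem isBigO_sqrt_quarter_sub_sub_half (hQ : Q =O[𝓝[>] 0] (fun _ => (1 : ℝ))) :
    (fun ε => √(1 / 4 - ε * Q ε) - 1 / 2) =O[𝓝[>] 0] (fun ε => ε) := by
  have hεQ : (fun ε => ε * Q ε) =O[𝓝[>] 0] (fun ε => ε) := by
    simpa using (isBigO_refl (fun ε : ℝ => ε) _).mul hQ
  have hsmall : ∀ᶠ ε in 𝓝[>] (0 : ℝ), ε * Q ε ≤ 1 / 4 :=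
    ((hεQ.trans_tendsto nhdsWithin_le_nhds).eventually_lt_const (by norm_num)).mono
      fun _ h => h.le
  refine (IsBigO.of_bound 2 ?_).trans hεQ
  filter_upwards [hsmall] with ε hs
  simpa only [Real.norm_eq_abs] using abs_sqrt_quarter_sub_sub_half_le hs

theorem isBigO_inv_two_mul_sub_one (hc : Tendsto c (𝓝[>] 0) (𝓝 a)) :
    (fun ε => 1 / (2 * (1 / 2 + ε * c ε)) - 1) =O[𝓝[>] 0] (fun ε => ε) := by
  have hε : Tendsto (fun ε : ℝ => ε) (𝓝[>] 0) (𝓝 0) := nhdsWithin_le_nhds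
  have hden : Tendsto (fun ε => 1 + 2 * ε * c ε) (𝓝[>] 0) (𝓝 1) := by
    simpa using ((hε.const_mul 2).mul hc).const_add 1
  have hg : Tendsto (fun ε => -2 * c ε / (1 + 2 * ε * c ε)) (𝓝[>] 0) (𝓝 (-2 * a / 1)) :=
    (hc.const_mul (-2)).div hden one_ne_zero
  refine ((isBigO_refl (fun ε : ℝ => ε) _).mul (hg.isBigO_one ℝ)).congr' ?_
    (Eventually.of_forall fun _ => mul_one _)
  filter_upwards [hden.eventually_const_lt one_pos] with ε hpos
  rw [show 2 * (1 / 2 + ε * c ε) = 1 + 2 * ε * c ε by ring, div_sub_one hpos.ne',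
    ← mul_div_assoc]
  ring

theorem isLittleO_log_ratio_sub (ha : 0 < a) (hb : 0 < b) (hab : a + b = 1)
    (hm : m =O[𝓝[>] 0] (fun _ => (1 : ℝ))) (ht : Tendsto t (𝓝[>] 0) (𝓝 0))
    (hεt : (fun ε => ε) =o[𝓝[>] 0] t) :
    (fun ε => log ((1 / 2 + ε * (a + m ε * t ε) - 1 / 2)
        / (1 / 2 - √((1 / 2 + ε * (a + m ε * t ε)) ^ 2 - ε / (1 - ε))))
      - log (a / b) - m ε / (a * b) * t ε) =o[𝓝[>] 0] t := by
  have hu : (fun ε => m ε * t ε) =O[𝓝[>] 0] t := by simpa using hm.mul (isBigO_refl t _)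
  have hc : Tendsto (fun ε => a + m ε * t ε) (𝓝[>] 0) (𝓝 a) := by
    simpa using (hu.trans_tendsto ht).const_add a
  have hQ1 := isBigO_quarterDefect_sub_one_sub hc
  have hQb : (fun ε => quarterDefect ε (a + m ε * t ε) - b) =O[𝓝[>] 0] t :=
    ((hQ1.trans hεt.isBigO).sub hu).congr_left fun ε => by linear_combination hab
  have hQ : Tendsto (fun ε => quarterDefect ε (a + m ε * t ε)) (𝓝[>] 0) (𝓝 b) :=
    tendsto_sub_nhds_zero_iff.mp (hQb.trans_tendsto ht)
  have hsmall : ∀ᶠ ε in 𝓝[>] (0 : ℝ), ε * quarterDefect ε (a + m ε * t ε) < 1 / 4 := by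
    have hε : Tendsto (fun ε : ℝ => ε) (𝓝[>] 0) (𝓝 0) := nhdsWithin_le_nhds
    have := hε.mul hQ
    rw [zero_mul] at this
    exact this.eventually_lt_const (by norm_num)
  have hν := isBigO_sqrt_quarter_sub_sub_half (hQ.isBigO_one ℝ)
  have L1 := isLittleO_log_add_sub_log_sub_div ha hu ht
  have L2 := isLittleO_log_add_sub_log_sub_div hb hQb ht
  have L3 := isLittleO_log_add_sub_log_sub_div one_pos (hν.trans hεt.isBigO) ht
  refine ((((L1.add L3).sub L2).add (hν.trans_isLittleO hεt)).sub
    ((hQ1.trans_isLittleO hεt).const_mul_left b⁻¹)).congr' ?_ EventuallyEq.rfl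
  filter_upwards [self_mem_nhdsWithin, hc.eventually_const_lt ha, hQ.eventually_const_lt hb,
    hsmall] with ε hε hcpos hQpos hQ4
  rw [log_ratio_eq_log_add_log_sub_log hε hcpos hQpos hQ4.le, log_div ha.ne' hb.ne']
  obtain rfl : b = 1 - a := by linarith
  simp only [log_one, add_sub_cancel, div_one]
  field_simp
  ring

theorem isLittleO_inv_two_mu_mul_log_ratio_sub (ha : 0 < a) (hb : 0 < b) (hab : a + b = 1)
    (hm : m =O[𝓝[>] 0] (fun _ => (1 : ℝ))) (ht : Tendsto t (𝓝[>] 0) (𝓝 0))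
    (hεt : (fun ε => ε) =o[𝓝[>] 0] t) (hμ : ∀ ε, μ ε = 1 / 2 + ε * (a + m ε * t ε)) :
    (fun ε => 1 / (2 * μ ε) * log ((μ ε - 1 / 2) / (1 / 2 - √(μ ε ^ 2 - ε / (1 - ε))))
      - log (a / b) - m ε / (a * b) * t ε) =o[𝓝[>] 0] t := by
  obtain rfl : μ = _ := funext hμ
  beta_reduce
  have hG := isLittleO_log_ratio_sub ha hb hab hm ht hεt
  have hu : (fun ε => m ε * t ε) =O[𝓝[>] 0] t := by simpa using hm.mul (isBigO_refl t _)
  have hc : Tendsto (fun ε => a + m ε * t ε) (𝓝[>] 0) (𝓝 a) := by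
    simpa using (hu.trans_tendsto ht).const_add a
  have hmt : (fun ε => m ε / (a * b) * t ε) =O[𝓝[>] 0] t :=
    (hu.const_mul_left (a * b)⁻¹).congr_left fun ε => by ring
  have hlog := ((hG.trans_tendsto ht).add (hmt.trans_tendsto ht)).const_add (log (a / b))
  rw [add_zero, add_zero] at hlog
  have hpre := isBigO_inv_two_mul_sub_one hc
  refine (hG.add ((hpre.mul (hlog.isBigO_one ℝ)).trans_isLittleO (by simpa using hεt))).congr'
    (Eventually.of_forall fun ε => by ring) EventuallyEq.rfl

end

theorem tendsto_mul_log_sq_nhdsGT_zero : Tendsto (fun ε => ε * log ε ^ 2) (𝓝[>] 0) (𝓝 0) := by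
  have h := tendsto_log_mul_rpow_nhdsGT_zero (by norm_num : (0 : ℝ) < 1 / 2)
  have h2 := h.mul h
  rw [mul_zero] at h2
  refine h2.congr' ?_
  filter_upwards [self_mem_nhdsWithin] with ε (hε : 0 < ε)
  rw [← sqrt_eq_rpow, mul_mul_mul_comm, mul_self_sqrt hε.le]
  ring

theorem isLittleO_id_mul_log_sq : (fun ε => ε) =o[𝓝[>] 0] (fun ε => ε * log ε ^ 2) := by
  have hlog : Tendsto (fun ε => ‖log ε ^ 2‖) (𝓝[>] 0) atTop := by
    simpa [sq] using tendsto_log_nhdsGT_zero.atBot_mul_atBot₀ tendsto_log_nhdsGT_zero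
  simpa using
    (isBigO_refl (fun ε : ℝ => ε) _).mul_isLittleO ((isLittleO_one_left_iff ℝ).mpr hlog)

theorem statement17_general (μ₁ K ε₀ : ℝ) (hμ₁ : μ₁ ∈ Set.Ioo (-(1 / 2) : ℝ) (1 / 2))
    (hε₀ : 0 < ε₀) (μ₂ : ℝ → ℝ)
    (hμ₂ : ∀ ε ∈ Set.Ioo (0:ℝ) ε₀, |μ₂ ε| ≤ K) :
    Filter.Tendsto (fun ε : ℝ =>
      ((1 / (2 * muTilde μ₁ μ₂ ε))
          * Real.log ((muTilde μ₁ μ₂ ε - 1 / 2) / (1 / 2 - nuTilde μ₁ μ₂ ε))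
        - Real.log ((1 / 2 + μ₁) / (1 / 2 - μ₁))
        - (μ₂ ε / (1 / 4 - μ₁ ^ 2)) * ε * (Real.log ε) ^ 2) / (ε * (Real.log ε) ^ 2))
      (nhdsWithin 0 (Set.Ioi 0)) (nhds 0) := by
  obtain ⟨hμ₁lo, hμ₁hi⟩ := hμ₁
  have hm : μ₂ =O[𝓝[>] 0] (fun _ => (1 : ℝ)) := by
    refine IsBigO.of_bound K ?_
    filter_upwards [Ioo_mem_nhdsGT hε₀] with ε hε
    simpa using hμ₂ ε hε
  have key := isLittleO_inv_two_mu_mul_log_ratio_sub (a := 1 / 2 + μ₁) (b := 1 / 2 - μ₁)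
    (by linarith) (by linarith) (by ring) hm tendsto_mul_log_sq_nhdsGT_zero
    isLittleO_id_mul_log_sq (μ := muTilde μ₁ μ₂) fun ε => by unfold muTilde; ring
  refine key.tendsto_div_nhds_zero.congr fun ε => ?_
  rw [show (1 : ℝ) / 4 - μ₁ ^ 2 = (1 / 2 + μ₁) * (1 / 2 - μ₁) by ring, nuTilde]
  ring

/-- Asymptotic expansion of the key logarithmic term of the dispersion relation:
with `μ̃(ε) = 1/2 + (1/2+μ₁)ε + μ̃₂(ε) ε² log²ε` and `ν̃(ε) = √(μ̃(ε)² − ε/(1−ε))`, the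
quantity `(1/(2μ̃)) log((μ̃−1/2)/(1/2−ν̃))` equals
`log((1/2+μ₁)/(1/2−μ₁)) + (μ̃₂/(1/4−μ₁²)) ε log²ε + o(ε log²ε)` as `ε → 0⁺`. -/
theorem statement17 (μ₁ K ε₀ : ℝ) (hμ₁ : μ₁ ∈ Set.Ioo (-(1 / 2) : ℝ) (1 / 2))
    (hK : 0 < K) (hε₀ : 0 < ε₀) (μ₂ : ℝ → ℝ)
    (hμ₂ : ∀ ε ∈ Set.Ioo (0:ℝ) ε₀, |μ₂ ε| ≤ K) :
    Filter.Tendsto (fun ε : ℝ =>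
      ((1 / (2 * muTilde μ₁ μ₂ ε))
          * Real.log ((muTilde μ₁ μ₂ ε - 1 / 2) / (1 / 2 - nuTilde μ₁ μ₂ ε))
        - Real.log ((1 / 2 + μ₁) / (1 / 2 - μ₁))
        - (μ₂ ε / (1 / 4 - μ₁ ^ 2)) * ε * (Real.log ε) ^ 2) / (ε * (Real.log ε) ^ 2))
      (nhdsWithin 0 (Set.Ioi 0)) (nhds 0) :=
  statement17_general μ₁ K ε₀ hμ₁ hε₀ μ₂ hμ₂

end
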